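/- Let X be a δ-hyperbolic geodesic metric space and let f, g ∈ Isom(X) be independent hyperbolic isometries, with A_+ and A_- the attracting and repelling fixed points of f in ∂X. Then there are disjoint neighborhoods U_+ of A_+ and U_- of A_- in X̄ and an N ≥ 1 such that for every k ≥ N, g^k U_+ ∩ U_- = ∅. -/

import Mathlib

open Filter Metric Set

noncomputable section

universe u

variable {X : Type u} [MetricSpace X]

/-- The Gromov product `(x·y)_w = ½(d(x,w) + d(w,y) − d(x,y))`. -/
def gromovProduct (w x y : X) : ℝ := (dist x w + dist w y - dist x y) / 2

/-- `γ` is a geodesic from `x` to `y`, parametrized by arc length on `[0, dist x y]`. -/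
structure IsGeodesicSegment (γ : ℝ → X) (x y : X) : Prop where
  source : γ 0 = x
  target : γ (dist x y) = y
  isom : ∀ ⦃s t : ℝ⦄, s ∈ Set.Icc (0 : ℝ) (dist x y) → t ∈ Set.Icc (0 : ℝ) (dist x y) →
    dist (γ s) (γ t) = |s - t|

/-- A geodesic metric space is `δ`-hyperbolic: every pair of points is joined by a
geodesic, every geodesic triangle is `δ`-slim, every geodesic triangle has insize at
most `δ`, and the Gromov product is `δ`-hyperbolic. -/
structure IsDeltaHyperbolic (X : Type u) [MetricSpace X] (δ : ℝ) : Prop where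
  delta_nonneg : 0 ≤ δ
  geodesic : ∀ x y : X, ∃ γ : ℝ → X, IsGeodesicSegment γ x y
  slim : ∀ (x y z : X) (α β γ : ℝ → X),
    IsGeodesicSegment α y z → IsGeodesicSegment β z x → IsGeodesicSegment γ x y →
    ∀ s ∈ Set.Icc (0 : ℝ) (dist y z),
      (∃ t ∈ Set.Icc (0 : ℝ) (dist z x), dist (α s) (β t) ≤ δ) ∨
      (∃ t ∈ Set.Icc (0 : ℝ) (dist x y), dist (α s) (γ t) ≤ δ)
  insize : ∀ (x y z : X) (α β γ : ℝ → X),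
    IsGeodesicSegment α y z → IsGeodesicSegment β z x → IsGeodesicSegment γ x y →
    dist (α (gromovProduct y x z)) (β (gromovProduct z x y)) ≤ δ ∧
    dist (β (gromovProduct z x y)) (γ (gromovProduct x y z)) ≤ δ ∧
    dist (γ (gromovProduct x y z)) (α (gromovProduct y x z)) ≤ δ
  gromov : ∀ w x y z : X,
    min (gromovProduct w x y) (gromovProduct w y z) - δ ≤ gromovProduct w x z

/-- An isometry `f` of `X` is hyperbolic if for every `x ∈ X` there is `t > 0` with
`t|m − n| ≤ d(f^m x, f^n x)` for all integers `m, n`. -/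
def IsHyperbolicIsometry (f : X ≃ᵢ X) : Prop :=
  ∀ x : X, ∃ t : ℝ, 0 < t ∧
    ∀ m n : ℤ, t * |(m : ℝ) - (n : ℝ)| ≤ dist ((f ^ m) x) ((f ^ n) x)

/-- A sequence converges to infinity if the Gromov products `(x_i·x_j)_w → ∞`. -/
def ConvergesToInfinity (w : X) (u : ℕ → X) : Prop :=
  Tendsto (fun p : ℕ × ℕ => gromovProduct w (u p.1) (u p.2)) atTop atTop

/-- Two sequences are equivalent if the mixed Gromov products tend to infinity. -/
def SeqEquiv (w : X) (u v : ℕ → X) : Prop :=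
  Tendsto (fun p : ℕ × ℕ => gromovProduct w (u p.1) (v p.2)) atTop atTop

/-- Sequences converging to infinity. -/
def BoundarySeq (w : X) : Type u := {u : ℕ → X // ConvergesToInfinity w u}

/-- The Gromov boundary `∂X`: equivalence classes of sequences converging to infinity. -/
def GromovBoundary (w : X) : Type u :=
  Quot (fun u v : BoundarySeq w => SeqEquiv w u.1 v.1)

/-- The boundary point determined by a sequence converging to infinity. -/
def boundaryPt (w : X) (u : BoundarySeq w) : GromovBoundary w := Quot.mk _ u

/-- `X̄ = X ∪ ∂X`. -/
def GromovClosure (w : X) : Type u := X ⊕ GromovBoundary w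

theorem gromovProduct_basepoint_ge (w w' x y : X) :
    gromovProduct w x y - dist w w' ≤ gromovProduct w' x y := by
  have h1 : |dist w' x - dist w x| ≤ dist w' w := abs_dist_sub_le w' w x
  have h2 : |dist w' y - dist w y| ≤ dist w' w := abs_dist_sub_le w' w y
  rw [abs_le] at h1 h2
  unfold gromovProduct
  rw [dist_comm x w', dist_comm x w, dist_comm w w']
  linarith [h1.1, h1.2, h2.1, h2.2]

theorem gromovProduct_isometry (f : X ≃ᵢ X) (w x y : X) :
    gromovProduct w (f x) (f y) = gromovProduct (f.symm w) x y := by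
  unfold gromovProduct
  conv_lhs => rw [show w = f (f.symm w) from (f.apply_symm_apply w).symm]
  rw [f.dist_eq, f.dist_eq, f.dist_eq]

theorem convergesToInfinity_isometry {w : X} (f : X ≃ᵢ X) {u : ℕ → X}
    (h : ConvergesToInfinity w u) :
    ConvergesToInfinity w (fun n => f (u n)) := by
  refine tendsto_atTop_mono (fun p => ?_)
    (tendsto_atTop_add_const_right atTop (-dist w (f.symm w)) h)
  have h1 := gromovProduct_basepoint_ge w (f.symm w) (u p.1) (u p.2)
  have h2 := gromovProduct_isometry f w (u p.1) (u p.2)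
  dsimp only
  linarith

theorem seqEquiv_isometry {w : X} (f : X ≃ᵢ X) {u v : ℕ → X}
    (h : SeqEquiv w u v) :
    SeqEquiv w (fun n => f (u n)) (fun n => f (v n)) := by
  refine tendsto_atTop_mono (fun p => ?_)
    (tendsto_atTop_add_const_right atTop (-dist w (f.symm w)) h)
  have h1 := gromovProduct_basepoint_ge w (f.symm w) (u p.1) (v p.2)
  have h2 := gromovProduct_isometry f w (u p.1) (v p.2)
  dsimp only
  linarith

/-- The extension of an isometry of `X` to the Gromov boundary. -/
def boundaryMap (w : X) (f : X ≃ᵢ X) : GromovBoundary w → GromovBoundary w :=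
  Quot.lift
    (fun u : BoundarySeq w =>
      boundaryPt w ⟨fun n => f (u.1 n), convergesToInfinity_isometry f u.2⟩)
    (fun _ _ h => Quot.sound (seqEquiv_isometry f h))

/-- The extension of an isometry of `X` to `X̄ = X ∪ ∂X`. -/
def closureMap (w : X) (f : X ≃ᵢ X) : GromovClosure w → GromovClosure w
  | Sum.inl x => Sum.inl (f x)
  | Sum.inr a => Sum.inr (boundaryMap w f a)

/-- The Gromov product of a boundary point with a point of `X̄`, extended by
taking infima of liminfs over representative sequences. -/
noncomputable def boundaryGP (w : X) (a : GromovBoundary w) : GromovClosure w → ℝ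
  | Sum.inl p => sInf {r : ℝ | ∃ u : BoundarySeq w, boundaryPt w u = a ∧
      r = Filter.liminf (fun n => gromovProduct w (u.1 n) p) atTop}
  | Sum.inr b => sInf {r : ℝ | ∃ u v : BoundarySeq w, boundaryPt w u = a ∧
      boundaryPt w v = b ∧
      r = Filter.liminf (fun n => gromovProduct w (u.1 n) (v.1 n)) atTop}

/-- The basis for the topology on `X̄`: open balls in `X`, and the sets
`N(â,k) = {y : (â·y)_w > k}` for boundary points `â` and `k > 0`. -/
def closureBasis (w : X) : Set (Set (GromovClosure w)) :=
  {S | (∃ (x : X) (r : ℝ), 0 < r ∧ S = Sum.inl '' Metric.ball x r) ∨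
       (∃ (a : GromovBoundary w) (k : ℝ), 0 < k ∧ S = {y | k < boundaryGP w a y})}

/-- The topology on `X̄` generated by the basis above. -/
def closureTop (w : X) : TopologicalSpace (GromovClosure w) :=
  TopologicalSpace.generateFrom (closureBasis w)

/-- `S ⊆ X̄` is a neighborhood of `p ∈ X̄`. -/
def IsNeighborhood (w : X) (S : Set (GromovClosure w)) (p : GromovClosure w) : Prop :=
  S ∈ @nhds (GromovClosure w) (closureTop w) p

/-- `a ∈ ∂X` is the attracting fixed point of `f`: it is represented by the
sequence `(f^n x)` for a point `x ∈ X`. -/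
def IsAttractingFixedPt (w : X) (f : X ≃ᵢ X) (a : GromovBoundary w) : Prop :=
  ∃ (x : X) (h : ConvergesToInfinity w (fun n : ℕ => (f ^ (n : ℤ)) x)),
    boundaryPt w ⟨fun n : ℕ => (f ^ (n : ℤ)) x, h⟩ = a

/-- `a ∈ ∂X` is the repelling fixed point of `f`: the attracting fixed point of `f⁻¹`. -/
def IsRepellingFixedPt (w : X) (f : X ≃ᵢ X) (a : GromovBoundary w) : Prop :=
  IsAttractingFixedPt w f⁻¹ a

/-- The concatenation `α · (f α)` of a path `α` defined on `[0, L]` with its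
image under `f`, parametrized on `[0, 2L]`. -/
noncomputable def concatPath (f : X ≃ᵢ X) (α : ℝ → X) (L : ℝ) : ℝ → X :=
  fun s => if s ≤ L then α s else f (α (s - L))

/-!
Fix a large `M` and let `U₊ = N(fᴹ B₊, k)` and `U₋ = N(f⁻ᴹ B₊, k)` for a constant `k` that does not
depend on `M`. As `B₊ ∉ {A₊, A₋}`, the representatives `fᴹ gⁿ w` of `fᴹ B₊` head in the direction
of `fᴹ w`, and so do the representatives `fᴹ⁺ⁿ w` of `A₊ = fᴹ A₊`; hence `(fᴹ B₊ · A₊)_w` is about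
`d(w, fᴹ w)` and `A₊ ∈ U₊`, and symmetrically `A₋ ∈ U₋`. Since `fᴹ w` and `f⁻ᴹ w` point in
different directions, `U₊ ∩ U₋ = ∅`. A point of `U₊` points away from `B₋`, as `fᴹ B₊` does, so for
large `n` the isometry `gⁿ` moves it into the direction of `B₊`, which `f⁻ᴹ B₊` avoids; thus
`gⁿ U₊ ∩ U₋ = ∅`.

All estimates come from uniform bounds on Gromov products between orbits converging to distinct
boundary points. For the two orbits of `f` the distinctness `A₊ ≠ A₋` is where the linear growth
of `d(w, fⁿ w)` enters: it forces `(fⁱ w · f⁻ᵇ w)_w < d(w, fⁱ w)/2` for some large `b`, and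
δ-hyperbolicity spreads this bound, up to `δ`, to all large `b` and then from `fⁱ w` to every far
`fᵃ w`.

The neighbourhoods cannot be centred at `A±` themselves: the liminfs defining `(A₊ · A₊)_w`
diverge, and the real `liminf` of a divergent sequence is `0`, so `A₊ ∉ N(A₊, k)`.
-/

section GromovProduct

theorem gromovProduct_comm (w x y : X) : gromovProduct w x y = gromovProduct w y x := by
  unfold gromovProduct
  rw [dist_comm x w, dist_comm w y, dist_comm x y]
  ring

theorem gromovProduct_nonneg (w x y : X) : 0 ≤ gromovProduct w x y := by
  unfold gromovProduct
  linarith [dist_triangle x w y]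

theorem gromovProduct_le_dist (w x y : X) : gromovProduct w x y ≤ dist w x := by
  unfold gromovProduct
  linarith [dist_triangle w x y, dist_comm x w]

theorem gromovProduct_sub_dist_le (w x y y' : X) :
    gromovProduct w x y - dist y y' ≤ gromovProduct w x y' := by
  unfold gromovProduct
  linarith [dist_triangle w y' y, dist_triangle x y y', dist_comm y y']

theorem dist_inv_apply (F : X ≃ᵢ X) (x y : X) : dist x (F⁻¹ y) = dist (F x) y := by
  rw [← F.dist_eq, IsometryEquiv.apply_inv_self]

theorem dist_inv_apply_self (F : X ≃ᵢ X) (w : X) : dist w (F⁻¹ w) = dist w (F w) := by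
  rw [dist_inv_apply, dist_comm]

theorem gromovProduct_apply_apply_self (F : X ≃ᵢ X) (w q : X) :
    gromovProduct w (F q) (F w) = dist w (F⁻¹ w) - gromovProduct w q (F⁻¹ w) := by
  rw [gromovProduct_isometry]
  unfold gromovProduct
  rw [show F.symm w = F⁻¹ w from rfl, dist_comm w (F⁻¹ w), dist_comm q (F⁻¹ w)]
  ring

end GromovProduct

def GromovProductHyperbolic (X : Type u) [MetricSpace X] (δ : ℝ) : Prop :=
  ∀ w x y z : X, min (gromovProduct w x y) (gromovProduct w y z) - δ ≤ gromovProduct w x z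

namespace GromovProductHyperbolic

variable {δ : ℝ} {w x y z : X}

theorem nonneg (hδ : GromovProductHyperbolic X δ) (x : X) : 0 ≤ δ := by
  simpa using hδ x x x x

theorem le_gromovProduct (hδ : GromovProductHyperbolic X δ) {A : ℝ}
    (hxy : A ≤ gromovProduct w x y) (hyz : A ≤ gromovProduct w y z) :
    A - δ ≤ gromovProduct w x z :=
  le_trans (by simpa using le_min hxy hyz) (hδ w x y z)

theorem gromovProduct_le_of_add_lt (hδ : GromovProductHyperbolic X δ)
    (h : gromovProduct w x z + δ < gromovProduct w x y) :
    gromovProduct w y z ≤ gromovProduct w x z + δ := by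
  have := hδ w x y z
  rcases min_cases (gromovProduct w x y) (gromovProduct w y z) with ⟨hm, -⟩ | ⟨hm, -⟩ <;>
    linarith

theorem gromovProduct_le_of_le_of_lt (hδ : GromovProductHyperbolic X δ) {C : ℝ}
    (hxz : gromovProduct w x z ≤ C) (hyz : C + δ < gromovProduct w y z) : gromovProduct w x y ≤ C + δ := by
  rw [gromovProduct_comm] at hxz hyz ⊢
  have := hδ.gromovProduct_le_of_add_lt (x := z) (y := y) (z := x) (by linarith)
  linarith

/-- Seen from a basepoint `z` far from `w`, two points whose directions from `w` both leave that
of `z` early look close together. -/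
theorem dist_sub_max_le_gromovProduct (hδ : GromovProductHyperbolic X δ) (w z p q : X) :
    dist w z - max (gromovProduct w p z) (gromovProduct w q z) - δ ≤ gromovProduct z p q := by
  have swap : ∀ r : X, gromovProduct z r w = dist w z - gromovProduct w r z := fun r => by
    unfold gromovProduct; rw [dist_comm r w, dist_comm z w, dist_comm r z]; ring
  have := hδ z p w q
  rw [swap p, gromovProduct_comm z w q, swap q] at this
  have hp := le_max_left (gromovProduct w p z) (gromovProduct w q z)
  have hq := le_max_right (gromovProduct w p z) (gromovProduct w q z)
  have : dist w z - max (gromovProduct w p z) (gromovProduct w q z) ≤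
      min (dist w z - gromovProduct w p z) (dist w z - gromovProduct w q z) :=
    le_min (by linarith) (by linarith)
  linarith

end GromovProductHyperbolic

section Boundary

variable {δ : ℝ} {w : X}

theorem SeqEquiv.symm {u v : ℕ → X} (h : SeqEquiv w u v) : SeqEquiv w v u := by
  have hswap : Tendsto (Prod.swap : ℕ × ℕ → ℕ × ℕ) atTop atTop := by
    simpa only [← prod_atTop_atTop_eq] using tendsto_prod_swap
  exact (h.comp hswap).congr fun p => gromovProduct_comm _ _ _

theorem SeqEquiv.trans (hδ : GromovProductHyperbolic X δ) {u v z : ℕ → X}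
    (huv : SeqEquiv w u v) (hvz : SeqEquiv w v z) : SeqEquiv w u z := by
  refine tendsto_atTop.2 fun R => ?_
  obtain ⟨N, hN⟩ := eventually_atTop_prod_self'.1
    ((tendsto_atTop.1 huv (R + δ)).and (tendsto_atTop.1 hvz (R + δ)))
  refine eventually_atTop_prod_self'.2 ⟨N, fun i hi j hj => ?_⟩
  linarith [hδ.le_gromovProduct (hN i hi N le_rfl).1 (hN N le_rfl j hj).2]

theorem equivalence_seqEquiv (hδ : GromovProductHyperbolic X δ) :
    Equivalence (fun u v : BoundarySeq w => SeqEquiv w u.1 v.1) :=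
  ⟨fun u => u.2, SeqEquiv.symm, SeqEquiv.trans hδ⟩

theorem boundaryPt_eq_iff (hδ : GromovProductHyperbolic X δ) {u v : BoundarySeq w} :
    boundaryPt w u = boundaryPt w v ↔ SeqEquiv w u.1 v.1 :=
  ⟨fun h => (equivalence_seqEquiv hδ).eqvGen_iff.1 (Quot.eqvGen_exact h), fun h => Quot.sound h⟩

theorem eventually_eventually_gromovProduct_le (hδ : GromovProductHyperbolic X δ)
    {u v : BoundarySeq w} (huv : boundaryPt w u ≠ boundaryPt w v) :
    ∀ᶠ C in atTop, ∀ᶠ p : ℕ × ℕ in atTop, gromovProduct w (u.1 p.1) (v.1 p.2) ≤ C := by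
  obtain ⟨R, hR⟩ : ∃ R, ∃ᶠ p : ℕ × ℕ in atTop, gromovProduct w (u.1 p.1) (v.1 p.2) < R := by
    by_contra! h
    exact huv ((boundaryPt_eq_iff hδ).2 (tendsto_atTop.2 h))
  obtain ⟨N, hN⟩ := eventually_atTop_prod_self'.1
    ((tendsto_atTop.1 u.2 (R + 2 * δ)).and (tendsto_atTop.1 v.2 (R + 2 * δ)))
  dsimp only at hN
  refine eventually_atTop.2 ⟨R + 2 * δ, fun C hC => eventually_atTop_prod_self'.2
    ⟨N, fun n hn m hm => hC.trans' (not_lt.1 fun hnm => ?_)⟩⟩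
  obtain ⟨⟨I, J⟩, ⟨hI, hJ⟩, hIJ⟩ := frequently_atTop.1 hR (N, N)
  have hnJ : R + δ ≤ gromovProduct w (u.1 n) (v.1 J) := by
    linarith [hδ.le_gromovProduct hnm.le (hN m hm J hJ).2]
  have hIJ' : R ≤ gromovProduct w (u.1 I) (v.1 J) := by
    linarith [hδ.le_gromovProduct (A := R + δ) (by linarith [(hN I hI n hn).1, hδ.nonneg w]) hnJ]
  exact hIJ.not_ge hIJ'

end Boundary

section Orbits

variable {w : X}

theorem exists_boundaryPt_eq_of_dist_le {u v : ℕ → X} {c : ℝ} (hu : ConvergesToInfinity w u)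
    (huv : ∀ n, dist (u n) (v n) ≤ c) :
    ∃ hv : ConvergesToInfinity w v, boundaryPt w ⟨v, hv⟩ = boundaryPt w ⟨u, hu⟩ := by
  refine ⟨tendsto_atTop_mono (fun p => ?_) (tendsto_atTop_add_const_right _ (-(c + c)) hu),
    Quot.sound (SeqEquiv.symm (tendsto_atTop_mono (fun p => ?_)
      (tendsto_atTop_add_const_right _ (-c) hu)))⟩
  · have h₁ := gromovProduct_sub_dist_le w (u p.1) (u p.2) (v p.2)
    have h₂ := gromovProduct_sub_dist_le w (v p.2) (u p.1) (v p.1)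
    rw [gromovProduct_comm w (v p.2) (u p.1), gromovProduct_comm w (v p.2) (v p.1)] at h₂
    linarith [huv p.1, huv p.2]
  · linarith [gromovProduct_sub_dist_le w (u p.1) (u p.2) (v p.2), huv p.2]

theorem seqEquiv_comp_add {u : ℕ → X} (hu : ConvergesToInfinity w u) (k : ℕ) :
    SeqEquiv w (fun n => u (n + k)) u := by
  have hk : Tendsto (Prod.map (· + k) id : ℕ × ℕ → ℕ × ℕ) atTop atTop := by
    simpa only [← prod_atTop_atTop_eq] using (tendsto_add_atTop_nat k).prodMap tendsto_id
  exact (hu.comp hk :)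

def BoundarySeq.map (F : X ≃ᵢ X) (u : BoundarySeq w) : BoundarySeq w :=
  ⟨fun n => F (u.1 n), convergesToInfinity_isometry F u.2⟩

theorem boundaryMap_injective (F : X ≃ᵢ X) : Function.Injective (boundaryMap w F) := by
  refine Function.LeftInverse.injective (g := boundaryMap w F⁻¹) fun a => Quot.inductionOn a ?_
  exact fun u => congrArg (boundaryPt w) (Subtype.ext (funext fun n => F.inv_apply_self (u.1 n)))

theorem IsAttractingFixedPt.exists_orbit {f : X ≃ᵢ X} {A : GromovBoundary w}
    (hA : IsAttractingFixedPt w f A) :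
    ∃ h : ConvergesToInfinity w (fun n : ℕ => (f ^ n) w), boundaryPt w ⟨_, h⟩ = A := by
  obtain ⟨x, hx, rfl⟩ := hA
  exact exists_boundaryPt_eq_of_dist_le hx (c := dist x w) fun n => by
    rw [zpow_natCast, IsometryEquiv.dist_eq]

theorem IsRepellingFixedPt.exists_orbit {f : X ≃ᵢ X} {A : GromovBoundary w}
    (hA : IsRepellingFixedPt w f A) :
    ∃ h : ConvergesToInfinity w (fun n : ℕ => (f ^ n)⁻¹ w), boundaryPt w ⟨_, h⟩ = A := by
  obtain ⟨x, hx, rfl⟩ := hA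
  exact exists_boundaryPt_eq_of_dist_le hx (c := dist x w) fun n => by
    rw [zpow_natCast, inv_pow, IsometryEquiv.dist_eq]

theorem boundaryMap_pow_orbit {f : X ≃ᵢ X} (h : ConvergesToInfinity w fun n => (f ^ n) w)
    (k : ℕ) : boundaryMap w (f ^ k) (boundaryPt w ⟨_, h⟩) = boundaryPt w ⟨_, h⟩ := by
  have e : ∀ n, (f ^ k) ((f ^ n) w) = (f ^ (n + k)) w := fun n => by
    rw [← IsometryEquiv.mul_apply, ← pow_add, add_comm]
  exact Quot.sound ((seqEquiv_comp_add h k).congr fun p => by simp only [e])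

theorem boundaryMap_inv_pow_orbit {f : X ≃ᵢ X} (h : ConvergesToInfinity w fun n => (f ^ n)⁻¹ w)
    (k : ℕ) : boundaryMap w (f ^ k)⁻¹ (boundaryPt w ⟨_, h⟩) = boundaryPt w ⟨_, h⟩ := by
  have e : ∀ n, (f ^ k)⁻¹ ((f ^ n)⁻¹ w) = (f ^ (n + k))⁻¹ w := fun n => by
    rw [← IsometryEquiv.mul_apply, ← mul_inv_rev, ← pow_add]
  exact Quot.sound ((seqEquiv_comp_add h k).congr fun p => by simp only [e])

end Orbits

section ClosureGromovProduct

variable {δ : ℝ} {w : X}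

/-- `u` represents `y ∈ X̄`: it is constant at `y` if `y ∈ X`, and converges to `y` if
`y ∈ ∂X`. -/
def IsClosureRep (w : X) : GromovClosure w → (ℕ → X) → Prop
  | Sum.inl p, u => u = fun _ => p
  | Sum.inr a, u => ∃ h : ConvergesToInfinity w u, boundaryPt w ⟨u, h⟩ = a

theorem exists_isClosureRep (y : GromovClosure w) : ∃ u, IsClosureRep w y u := by
  rcases y with p | a
  · exact ⟨fun _ => p, rfl⟩
  · obtain ⟨u, rfl⟩ := Quot.exists_rep a
    exact ⟨u.1, u.2, rfl⟩

theorem IsClosureRep.closureMap {y : GromovClosure w} {u : ℕ → X} (hy : IsClosureRep w y u)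
    (F : X ≃ᵢ X) : IsClosureRep w (closureMap w F y) (fun n => F (u n)) := by
  rcases y with p | a
  · exact congrArg (fun u n => F (u n)) (hy : u = fun _ => p)
  · obtain ⟨h, rfl⟩ := hy
    exact ⟨convergesToInfinity_isometry F h, rfl⟩

theorem liminf_gromovProduct_nonneg (u v : ℕ → X) :
    0 ≤ liminf (fun n => gromovProduct w (u n) (v n)) atTop := by
  rw [liminf_eq]
  by_cases hb : BddAbove {a | ∀ᶠ n in atTop, a ≤ gromovProduct w (u n) (v n)}
  · exact le_csSup hb (Eventually.of_forall fun n => gromovProduct_nonneg w _ _)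
  · rw [Real.sSup_of_not_bddAbove hb]

theorem boundaryGP_le_liminf (v : BoundarySeq w) {y : GromovClosure w} {u : ℕ → X}
    (hy : IsClosureRep w y u) :
    boundaryGP w (boundaryPt w v) y ≤ liminf (fun n => gromovProduct w (v.1 n) (u n)) atTop := by
  rcases y with p | a
  · obtain rfl : u = fun _ => p := hy
    refine csInf_le ⟨0, ?_⟩ ⟨v, rfl, rfl⟩
    rintro _ ⟨v', -, rfl⟩
    exact liminf_gromovProduct_nonneg v'.1 fun _ => p
  · obtain ⟨h, rfl⟩ := hy
    refine csInf_le ⟨0, ?_⟩ ⟨v, ⟨u, h⟩, rfl, rfl, rfl⟩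
    rintro _ ⟨v', u', -, -, rfl⟩
    exact liminf_gromovProduct_nonneg v'.1 u'.1

theorem eventually_lt_of_lt_boundaryGP (v : BoundarySeq w) {y : GromovClosure w} {u : ℕ → X}
    (hy : IsClosureRep w y u) {k : ℝ} (hk : k < boundaryGP w (boundaryPt w v) y) :
    ∀ᶠ n in atTop, k < gromovProduct w (v.1 n) (u n) :=
  eventually_lt_of_lt_liminf (hk.trans_le (boundaryGP_le_liminf v hy))
    (isBoundedUnder_of_eventually_ge (Eventually.of_forall fun _ => gromovProduct_nonneg w _ _))

theorem boundaryGP_le_of_eventually_le (v : BoundarySeq w) {y : GromovClosure w} {u : ℕ → X}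
    (hy : IsClosureRep w y u) {C : ℝ} (hC : ∀ᶠ n in atTop, gromovProduct w (v.1 n) (u n) ≤ C) :
    boundaryGP w (boundaryPt w v) y ≤ C :=
  (boundaryGP_le_liminf v hy).trans <| liminf_le_of_frequently_le hC.frequently
    (isBoundedUnder_of_eventually_ge (Eventually.of_forall fun _ => gromovProduct_nonneg w _ _))

theorem eventually_le_gromovProduct_of_seqEquiv (hδ : GromovProductHyperbolic X δ)
    {u u₀ v v₀ : ℕ → X} (hu : SeqEquiv w u u₀) (hv : SeqEquiv w v₀ v) {K : ℝ}
    (h : ∀ᶠ p : ℕ × ℕ in atTop, K + 2 * δ ≤ gromovProduct w (u₀ p.1) (v₀ p.2)) :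
    ∀ᶠ n in atTop, K ≤ gromovProduct w (u n) (v n) := by
  obtain ⟨N, hN⟩ := eventually_atTop_prod_self'.1
    (((tendsto_atTop.1 hu (K + 2 * δ)).and h).and (tendsto_atTop.1 hv (K + 2 * δ)))
  dsimp only at hN
  refine eventually_atTop.2 ⟨N, fun n hn => ?_⟩
  have hnN : K + δ ≤ gromovProduct w (u n) (v₀ N) := by
    linarith [hδ.le_gromovProduct (hN n hn N le_rfl).1.1 (hN N le_rfl N le_rfl).1.2]
  linarith [hδ.le_gromovProduct (A := K + δ) hnN (by linarith [(hN N le_rfl n hn).2, hδ.nonneg w])]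

theorem le_boundaryGP_of_ne (hδ : GromovProductHyperbolic X δ) {u₀ v₀ : BoundarySeq w}
    (hne : boundaryPt w u₀ ≠ boundaryPt w v₀) {K : ℝ}
    (h : ∀ᶠ p : ℕ × ℕ in atTop, K + 2 * δ ≤ gromovProduct w (u₀.1 p.1) (v₀.1 p.2)) :
    K ≤ boundaryGP w (boundaryPt w u₀) (Sum.inr (boundaryPt w v₀)) := by
  refine le_csInf ⟨_, u₀, v₀, rfl, rfl, rfl⟩ ?_
  rintro _ ⟨u, v, hu, hv, rfl⟩
  obtain ⟨C, hC⟩ := (eventually_eventually_gromovProduct_le hδ fun e =>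
    hne (hu.symm.trans (e.trans hv))).exists
  exact le_liminf_of_le
    (isCoboundedUnder_ge_of_eventually_le atTop (tendsto_atTop_diagonal.eventually hC))
    (eventually_le_gromovProduct_of_seqEquiv hδ ((boundaryPt_eq_iff hδ).1 hu)
      ((boundaryPt_eq_iff hδ).1 hv.symm) h)

end ClosureGromovProduct

section HyperbolicIsometry

variable {δ : ℝ} {w : X} {f : X ≃ᵢ X}

theorem IsHyperbolicIsometry.exists_mul_le_dist (hf : IsHyperbolicIsometry f) (x : X) :
    ∃ t > 0, ∀ n : ℕ, t * n ≤ dist x ((f ^ n) x) := by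
  obtain ⟨t, ht, h⟩ := hf x
  refine ⟨t, ht, fun n => ?_⟩
  simpa [dist_comm] using h n 0

theorem IsHyperbolicIsometry.tendsto_dist (hf : IsHyperbolicIsometry f) (x : X) :
    Tendsto (fun n : ℕ => dist x ((f ^ n) x)) atTop atTop := by
  obtain ⟨t, ht, h⟩ := hf.exists_mul_le_dist x
  exact tendsto_atTop_mono h (tendsto_natCast_atTop_atTop.const_mul_atTop ht)

theorem mul_le_of_forall_le_add {D : ℕ → ℝ} {t c : ℝ} {i b₀ : ℕ} (hD : ∀ n, t * n ≤ D n)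
    (h : ∀ b ≥ b₀, D (b + i) ≤ D b + c) : t * i ≤ c := by
  have key : ∀ k : ℕ, D (b₀ + k * i) ≤ D b₀ + k * c := by
    intro k
    induction k with
    | zero => simp
    | succ k ih =>
      have := h (b₀ + k * i) (by omega)
      rw [show b₀ + (k + 1) * i = b₀ + k * i + i by ring]
      push_cast
      linarith
  by_contra! hc
  obtain ⟨k, hk⟩ := exists_nat_gt ((D b₀ - t * b₀) / (t * i - c))
  rw [div_lt_iff₀ (by linarith)] at hk
  have := (hD (b₀ + k * i)).trans (key k)
  push_cast at this
  nlinarith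

theorem two_mul_gromovProduct_pow_inv_pow (w : X) (a b : ℕ) :
    2 * gromovProduct w ((f ^ a) w) ((f ^ b)⁻¹ w) =
      dist w ((f ^ a) w) + dist w ((f ^ b) w) - dist w ((f ^ (a + b)) w) := by
  unfold gromovProduct
  rw [dist_inv_apply, dist_inv_apply, ← IsometryEquiv.mul_apply, ← pow_add, add_comm b a,
    dist_comm ((f ^ a) w) w, dist_comm ((f ^ b) w) w, dist_comm ((f ^ (a + b)) w) w]
  ring

theorem gromovProduct_pow_inv_pow_comm (w : X) (a b : ℕ) :
    gromovProduct w ((f ^ a) w) ((f ^ b)⁻¹ w) = gromovProduct w ((f ^ b) w) ((f ^ a)⁻¹ w) := by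
  have h₁ := two_mul_gromovProduct_pow_inv_pow (f := f) w a b
  have h₂ := two_mul_gromovProduct_pow_inv_pow (f := f) w b a
  rw [add_comm b a] at h₂
  linarith

theorem exists_two_mul_gromovProduct_pow_inv_pow_lt {t c : ℝ} {i : ℕ}
    (hD : ∀ n : ℕ, t * n ≤ dist w ((f ^ n) w)) (hi : c < t * i) (b₀ : ℕ) :
    ∃ b ≥ b₀, 2 * gromovProduct w ((f ^ i) w) ((f ^ b)⁻¹ w) < dist w ((f ^ i) w) - c := by
  by_contra! h
  refine hi.not_ge (mul_le_of_forall_le_add (b₀ := b₀) hD fun b hb => ?_)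
  have := two_mul_gromovProduct_pow_inv_pow (f := f) w i b
  rw [add_comm i b] at this
  linarith [h b hb]

theorem IsHyperbolicIsometry.exists_eventually_gromovProduct_pow_inv_pow_le
    (hδ : GromovProductHyperbolic X δ) (hf : IsHyperbolicIsometry f)
    (hback : ConvergesToInfinity w fun n => (f ^ n)⁻¹ w) :
    ∃ C, ∀ᶠ p : ℕ × ℕ in atTop, gromovProduct w ((f ^ p.1) w) ((f ^ p.2)⁻¹ w) ≤ C := by
  obtain ⟨t, ht, hD⟩ := hf.exists_mul_le_dist w
  obtain ⟨i, hi⟩ : ∃ i : ℕ, 3 * δ < t * i := by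
    obtain ⟨i, hi⟩ := exists_nat_gt (3 * δ / t)
    exact ⟨i, ((div_lt_iff₀ ht).1 hi).trans_eq (mul_comm _ _)⟩
  obtain ⟨S, hS⟩ := eventually_atTop_prod_self'.1 (tendsto_atTop.1 hback (dist w ((f ^ i) w)))
  -- Since the backward orbit converges, the bound at one large `b` propagates to all of them.
  have hsmall : ∀ b ≥ S,
      2 * gromovProduct w ((f ^ i) w) ((f ^ b)⁻¹ w) < dist w ((f ^ i) w) - δ := by
    intro b hb
    obtain ⟨b', hb', hlt⟩ := exists_two_mul_gromovProduct_pow_inv_pow_lt hD hi S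
    have := hδ.le_gromovProduct le_rfl
      ((gromovProduct_le_dist w ((f ^ i) w) ((f ^ b)⁻¹ w)).trans (hS b hb b' hb'))
    linarith
  refine ⟨(dist w ((f ^ i) w) + δ) / 2,
    eventually_atTop_prod_self'.2 ⟨i + S, fun a ha j hj => ?_⟩⟩
  obtain ⟨m, rfl⟩ := Nat.exists_eq_add_of_le' (le_of_add_le_left ha)
  -- `fⁱ w` lies on the way from `w` to `fᵐ⁺ⁱ w`, so it controls the products of `fᵐ⁺ⁱ w`.
  have hi_mi : (dist w ((f ^ i) w) + δ) / 2 < gromovProduct w ((f ^ i) w) ((f ^ (m + i)) w) := by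
    have := gromovProduct_apply_apply_self (f ^ i) w ((f ^ m) w)
    rw [← IsometryEquiv.mul_apply, ← pow_add, dist_inv_apply_self,
      gromovProduct_pow_inv_pow_comm] at this
    rw [gromovProduct_comm, add_comm m i, this]
    linarith [hsmall m (by omega)]
  have hj' := hsmall j (by omega)
  have hlt : gromovProduct w ((f ^ i) w) ((f ^ j)⁻¹ w) + δ <
      gromovProduct w ((f ^ i) w) ((f ^ (m + i)) w) := by
    linarith
  have := hδ.gromovProduct_le_of_add_lt hlt
  dsimp only
  linarith

theorem IsHyperbolicIsometry.attracting_ne_repelling (hδ : GromovProductHyperbolic X δ)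
    (hf : IsHyperbolicIsometry f) {A A' : GromovBoundary w} (hA : IsAttractingFixedPt w f A)
    (hA' : IsRepellingFixedPt w f A') : A ≠ A' := by
  obtain ⟨hfwd, rfl⟩ := hA.exists_orbit
  obtain ⟨hback, rfl⟩ := hA'.exists_orbit
  intro h
  obtain ⟨C, hC⟩ := hf.exists_eventually_gromovProduct_pow_inv_pow_le hδ hback
  obtain ⟨p, hp, hpC⟩ := ((tendsto_atTop.1 ((boundaryPt_eq_iff hδ).1 h) (C + 1)).and hC).exists
  linarith

end HyperbolicIsometry

section PingPong

variable {δ : ℝ} {w : X}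

/-- If `q` points away from `F⁻¹ w`, then `F q` points towards `F w`, so whatever points away
from `F w` also points away from `F q`. -/
theorem gromovProduct_apply_le (hδ : GromovProductHyperbolic X δ) (F : X ≃ᵢ X) {q x : X} {C : ℝ}
    (hq : gromovProduct w q (F⁻¹ w) ≤ C) (hx : gromovProduct w x (F w) ≤ C)
    (hF : 2 * C + δ < dist w (F w)) : gromovProduct w x (F q) ≤ C + δ := by
  have := gromovProduct_apply_apply_self F w q
  rw [dist_inv_apply_self] at this
  exact hδ.gromovProduct_le_of_le_of_lt hx (by linarith)

/-- North–south dynamics: `G` moves every point that does not point towards `G⁻¹ w` close to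
the direction of `G (G w)`. -/
theorem gromovProduct_apply_le_of_far (hδ : GromovProductHyperbolic X δ) (G : X ≃ᵢ X)
    {p y : X} {a b : ℝ} (hp : gromovProduct w p (G⁻¹ w) ≤ a)
    (hG : gromovProduct w (G w) (G⁻¹ w) ≤ a) (hy : gromovProduct w y (G (G w)) ≤ b)
    (hfar : a + b + 2 * δ < dist w (G w)) : gromovProduct w y (G p) ≤ b + δ := by
  have h := hδ.dist_sub_max_le_gromovProduct w (G⁻¹ w) p (G w)
  have e : gromovProduct w (G p) (G (G w)) = gromovProduct (G⁻¹ w) p (G w) :=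
    gromovProduct_isometry G w p (G w)
  rw [dist_inv_apply_self, ← e] at h
  exact hδ.gromovProduct_le_of_le_of_lt hy (by linarith [max_le hp hG])

/-- The basic open set `N(c, k)` of `X̄`. -/
def boundaryNbhd (w : X) (c : GromovBoundary w) (k : ℝ) : Set (GromovClosure w) :=
  {y | k < boundaryGP w c y}

theorem isNeighborhood_boundaryNbhd {c : GromovBoundary w} {k : ℝ} (hk : 0 < k)
    {y : GromovClosure w} (hy : y ∈ boundaryNbhd w c k) :
    IsNeighborhood w (boundaryNbhd w c k) y :=
  @IsOpen.mem_nhds _ (closureTop w) _ _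
    (TopologicalSpace.isOpen_generateFrom_of_mem (Or.inr ⟨c, k, hk, rfl⟩)) hy

theorem closureMap_one : closureMap w 1 = id := by
  funext y
  rcases y with p | a
  · rfl
  · exact congrArg Sum.inr (Quot.inductionOn a fun _ => rfl)

theorem image_boundaryNbhd_inter_eq_empty (u v : BoundarySeq w) (G : X ≃ᵢ X) {k C : ℝ}
    (hCk : C < k) (h : ∀ᶠ n in atTop, ∀ p, k < gromovProduct w (u.1 n) p →
      gromovProduct w (v.1 n) (G p) ≤ C) :
    closureMap w G '' boundaryNbhd w (boundaryPt w u) k ∩ boundaryNbhd w (boundaryPt w v) k =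
      ∅ := by
  refine Set.eq_empty_iff_forall_notMem.2 ?_
  rintro _ ⟨⟨y, hy, rfl⟩, hGy⟩
  obtain ⟨ys, hys⟩ := exists_isClosureRep y
  have := boundaryGP_le_of_eventually_le v (hys.closureMap G) <|
    (h.and (eventually_lt_of_lt_boundaryGP u hys hy)).mono fun n hn => hn.1 _ hn.2
  exact (hGy.trans_le this).not_ge hCk.le

end PingPong

section Centers

variable {δ : ℝ} {w : X}

theorem le_boundaryGP_boundaryMap (hδ : GromovProductHyperbolic X δ) (F : X ≃ᵢ X)
    {u v : BoundarySeq w} (hne : boundaryPt w v ≠ boundaryPt w u)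
    (hfix : boundaryMap w F (boundaryPt w u) = boundaryPt w u) {C : ℝ}
    (hu : ∀ᶠ n in atTop, gromovProduct w (u.1 n) (F⁻¹ w) ≤ C)
    (hv : ∀ᶠ n in atTop, gromovProduct w (v.1 n) (F⁻¹ w) ≤ C) :
    dist w (F w) - C - 3 * δ ≤
      boundaryGP w (boundaryMap w F (boundaryPt w v)) (Sum.inr (boundaryPt w u)) := by
  rw [← hfix]
  refine le_boundaryGP_of_ne hδ (u₀ := v.map F) (v₀ := u.map F)
    ((boundaryMap_injective F).ne hne) ?_
  have hvu := hv.prod_mk hu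
  rw [prod_atTop_atTop_eq] at hvu
  filter_upwards [hvu] with p hp
  change _ ≤ gromovProduct w (F (v.1 p.1)) (F (u.1 p.2))
  have hv' := gromovProduct_apply_apply_self F w (v.1 p.1)
  have hu' := gromovProduct_apply_apply_self F w (u.1 p.2)
  rw [dist_inv_apply_self] at hv' hu'
  rw [gromovProduct_comm w (F (u.1 p.2))] at hu'
  linarith [hδ.le_gromovProduct (A := dist w (F w) - C) (y := F w) (by linarith [hp.1])
    (by linarith [hp.2])]

theorem boundaryNbhd_inter_eq_empty (hδ : GromovProductHyperbolic X δ) (F : X ≃ᵢ X)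
    (v : BoundarySeq w) {C k : ℝ}
    (hv : ∀ᶠ n in atTop, gromovProduct w (v.1 n) (F⁻¹ w) ≤ C ∧ gromovProduct w (v.1 n) (F w) ≤ C)
    (hF : gromovProduct w (F w) (F⁻¹ w) ≤ C) (hfar : 2 * C + 3 * δ < dist w (F w))
    (hk : C + 3 * δ < k) :
    boundaryNbhd w (boundaryMap w F (boundaryPt w v)) k ∩
      boundaryNbhd w (boundaryMap w F⁻¹ (boundaryPt w v)) k = ∅ := by
  have hδ0 := hδ.nonneg w
  have := image_boundaryNbhd_inter_eq_empty (v.map F) (v.map F⁻¹) 1 (C := C + 3 * δ) hk ?_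
  · rwa [closureMap_one, Set.image_id] at this
  filter_upwards [hv] with n hn p hp
  change k < gromovProduct w (F (v.1 n)) p at hp
  change gromovProduct w (F⁻¹ (v.1 n)) p ≤ C + 3 * δ
  have h₁ := gromovProduct_apply_le hδ F (x := F⁻¹ w) hn.1 (by rwa [gromovProduct_comm])
    (by linarith)
  have h₂ := gromovProduct_apply_le hδ F⁻¹ (q := v.1 n) (x := F (v.1 n)) (C := C + δ)
    (by rw [inv_inv]; linarith [hn.2]) (by rwa [gromovProduct_comm])
    (by rw [dist_inv_apply_self]; linarith)
  rw [gromovProduct_comm] at h₂ hp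
  linarith [hδ.gromovProduct_le_of_le_of_lt (y := p) h₂ (by linarith)]

theorem image_boundaryNbhd_inter_eq_empty_of_far (hδ : GromovProductHyperbolic X δ)
    (F G : X ≃ᵢ X) (v : BoundarySeq w) {C k : ℝ}
    (hv : ∀ᶠ n in atTop, gromovProduct w (v.1 n) (F⁻¹ w) ≤ C ∧ gromovProduct w (v.1 n) (F w) ≤ C)
    (hGF : gromovProduct w (G⁻¹ w) (F w) ≤ C) (hGF' : gromovProduct w (G (G w)) (F⁻¹ w) ≤ C)
    (hG : gromovProduct w (G w) (G⁻¹ w) ≤ C) (hFfar : 2 * C + δ < dist w (F w))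
    (hGfar : 2 * C + 5 * δ < dist w (G w)) (hk : C + 2 * δ < k) :
    closureMap w G '' boundaryNbhd w (boundaryMap w F (boundaryPt w v)) k ∩
      boundaryNbhd w (boundaryMap w F⁻¹ (boundaryPt w v)) k = ∅ := by
  have hδ0 := hδ.nonneg w
  refine image_boundaryNbhd_inter_eq_empty (v.map F) (v.map F⁻¹) G (C := C + 2 * δ) hk ?_
  filter_upwards [hv] with n hn p hp
  change k < gromovProduct w (F (v.1 n)) p at hp
  change gromovProduct w (F⁻¹ (v.1 n)) (G p) ≤ C + 2 * δ
  have h₁ := gromovProduct_apply_le hδ F hn.1 hGF hFfar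
  rw [gromovProduct_comm] at hp
  have h₂ := hδ.gromovProduct_le_of_le_of_lt (y := p) h₁ (by linarith)
  have h₃ := gromovProduct_apply_le hδ F⁻¹ (x := G (G w)) (by rw [inv_inv]; exact hn.2) hGF'
    (by rw [dist_inv_apply_self]; exact hFfar)
  rw [gromovProduct_comm] at h₂ h₃
  linarith [gromovProduct_apply_le_of_far hδ G h₂ (by linarith) h₃ (by linarith)]

end Centers

/-- Uniform bounds, beyond the index `T`, on the Gromov products between those of the orbits
`fⁿ w`, `f⁻ⁿ w`, `gⁿ w`, `g⁻ⁿ w` that converge to distinct boundary points. -/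
structure OrbitBounds (w : X) (f g : X ≃ᵢ X) (C : ℝ) (T : ℕ) : Prop where
  f_f_inv : ∀ n ≥ T, ∀ m ≥ T, gromovProduct w ((f ^ n) w) ((f ^ m)⁻¹ w) ≤ C
  g_g_inv : ∀ n ≥ T, ∀ m ≥ T, gromovProduct w ((g ^ n) w) ((g ^ m)⁻¹ w) ≤ C
  g_f : ∀ n ≥ T, ∀ m ≥ T, gromovProduct w ((g ^ n) w) ((f ^ m) w) ≤ C
  g_f_inv : ∀ n ≥ T, ∀ m ≥ T, gromovProduct w ((g ^ n) w) ((f ^ m)⁻¹ w) ≤ C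
  g_inv_f : ∀ n ≥ T, ∀ m ≥ T, gromovProduct w ((g ^ n)⁻¹ w) ((f ^ m) w) ≤ C

theorem exists_orbitBounds {δ : ℝ} (hδ : GromovProductHyperbolic X δ) {w : X} {f g : X ≃ᵢ X}
    {hfp : ConvergesToInfinity w fun n => (f ^ n) w}
    {hfm : ConvergesToInfinity w fun n => (f ^ n)⁻¹ w}
    {hgp : ConvergesToInfinity w fun n => (g ^ n) w}
    {hgm : ConvergesToInfinity w fun n => (g ^ n)⁻¹ w}
    (hff : boundaryPt w ⟨_, hfp⟩ ≠ boundaryPt w ⟨_, hfm⟩)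
    (hgg : boundaryPt w ⟨_, hgp⟩ ≠ boundaryPt w ⟨_, hgm⟩)
    (hgf : boundaryPt w ⟨_, hgp⟩ ≠ boundaryPt w ⟨_, hfp⟩)
    (hgf' : boundaryPt w ⟨_, hgp⟩ ≠ boundaryPt w ⟨_, hfm⟩)
    (hg'f : boundaryPt w ⟨_, hgm⟩ ≠ boundaryPt w ⟨_, hfp⟩) :
    ∃ C T, OrbitBounds w f g C T := by
  obtain ⟨C, h₁, h₂, h₃, h₄, h₅⟩ := ((eventually_eventually_gromovProduct_le hδ hff).and <|
    (eventually_eventually_gromovProduct_le hδ hgg).and <|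
    (eventually_eventually_gromovProduct_le hδ hgf).and <|
    (eventually_eventually_gromovProduct_le hδ hgf').and <|
    eventually_eventually_gromovProduct_le hδ hg'f).exists
  obtain ⟨T, hT⟩ := eventually_atTop_prod_self'.1 (h₁.and <| h₂.and <| h₃.and <| h₄.and h₅)
  exact ⟨C, T, ⟨fun n hn m hm => (hT n hn m hm).1, fun n hn m hm => (hT n hn m hm).2.1,
    fun n hn m hm => (hT n hn m hm).2.2.1, fun n hn m hm => (hT n hn m hm).2.2.2.1,
    fun n hn m hm => (hT n hn m hm).2.2.2.2⟩⟩

namespace OrbitBounds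

variable {δ : ℝ} {w : X} {f g : X ≃ᵢ X} {C : ℝ} {T M : ℕ}

theorem eventually_le (hC : OrbitBounds w f g C T) (hM : T ≤ M) :
    ∀ᶠ n in atTop, gromovProduct w ((g ^ n) w) ((f ^ M)⁻¹ w) ≤ C ∧
      gromovProduct w ((g ^ n) w) ((f ^ M) w) ≤ C :=
  eventually_atTop.2 ⟨T, fun n hn => ⟨hC.g_f_inv n hn M hM, hC.g_f n hn M hM⟩⟩

theorem le_boundaryGP_attracting (hC : OrbitBounds w f g C T) (hδ : GromovProductHyperbolic X δ)
    (hM : T ≤ M) {hfp : ConvergesToInfinity w fun n => (f ^ n) w}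
    {hgp : ConvergesToInfinity w fun n => (g ^ n) w}
    (hne : boundaryPt w ⟨_, hgp⟩ ≠ boundaryPt w ⟨_, hfp⟩) :
    dist w ((f ^ M) w) - C - 3 * δ ≤
      boundaryGP w (boundaryMap w (f ^ M) (boundaryPt w ⟨_, hgp⟩))
        (Sum.inr (boundaryPt w ⟨_, hfp⟩)) :=
  le_boundaryGP_boundaryMap hδ (f ^ M) hne (boundaryMap_pow_orbit hfp M)
    (eventually_atTop.2 ⟨T, fun n hn => hC.f_f_inv n hn M hM⟩)
    ((hC.eventually_le hM).mono fun _ h => h.1)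

theorem le_boundaryGP_repelling (hC : OrbitBounds w f g C T) (hδ : GromovProductHyperbolic X δ)
    (hM : T ≤ M) {hfm : ConvergesToInfinity w fun n => (f ^ n)⁻¹ w}
    {hgp : ConvergesToInfinity w fun n => (g ^ n) w}
    (hne : boundaryPt w ⟨_, hgp⟩ ≠ boundaryPt w ⟨_, hfm⟩) :
    dist w ((f ^ M) w) - C - 3 * δ ≤
      boundaryGP w (boundaryMap w (f ^ M)⁻¹ (boundaryPt w ⟨_, hgp⟩))
        (Sum.inr (boundaryPt w ⟨_, hfm⟩)) := by
  have := le_boundaryGP_boundaryMap hδ (f ^ M)⁻¹ hne (boundaryMap_inv_pow_orbit hfm M)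
    (eventually_atTop.2 ⟨T, fun n hn => by
      rw [inv_inv, gromovProduct_comm]; exact hC.f_f_inv M hM n hn⟩)
    ((hC.eventually_le hM).mono fun _ h => by rw [inv_inv]; exact h.2)
  rwa [dist_inv_apply_self] at this

theorem image_inter_eq_empty (hC : OrbitBounds w f g C T) (hδ : GromovProductHyperbolic X δ)
    (hM : T ≤ M) (hMfar : 2 * C + δ < dist w ((f ^ M) w)) {n : ℕ} (hn : T ≤ n)
    (hnfar : 2 * C + 5 * δ < dist w ((g ^ n) w)) {hgp : ConvergesToInfinity w fun n => (g ^ n) w}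
    {k : ℝ} (hk : C + 2 * δ < k) :
    closureMap w (g ^ n) '' boundaryNbhd w (boundaryMap w (f ^ M) (boundaryPt w ⟨_, hgp⟩)) k ∩
      boundaryNbhd w (boundaryMap w (f ^ M)⁻¹ (boundaryPt w ⟨_, hgp⟩)) k = ∅ := by
  refine image_boundaryNbhd_inter_eq_empty_of_far hδ (f ^ M) (g ^ n) _ (hC.eventually_le hM)
    (hC.g_inv_f n hn M hM) ?_ (hC.g_g_inv n hn n hn) hMfar hnfar hk
  rw [← IsometryEquiv.mul_apply, ← pow_add]
  exact hC.g_f_inv _ (by omega) M hM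

end OrbitBounds

/-- If `f` and `g` are independent hyperbolic isometries (their
fixed-point pairs on `∂X` are disjoint), with `A₊`, `A₋` the attracting and
repelling fixed points of `f`, then there are disjoint neighborhoods `U₊` of `A₊`
and `U₋` of `A₋` in `X̄` and `N ≥ 1` such that `g^k U₊ ∩ U₋ = ∅` for all `k ≥ N`. -/
theorem independent_hyperbolic_neighborhoods (δ : ℝ) (hX : IsDeltaHyperbolic X δ) (w : X)
    (f g : X ≃ᵢ X) (hf : IsHyperbolicIsometry f) (hg : IsHyperbolicIsometry g)
    (Aplus Aminus Bplus Bminus : GromovBoundary w)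
    (hAp : IsAttractingFixedPt w f Aplus) (hAm : IsRepellingFixedPt w f Aminus)
    (hBp : IsAttractingFixedPt w g Bplus) (hBm : IsRepellingFixedPt w g Bminus)
    (hindep : (({Aplus, Aminus} : Set (GromovBoundary w)) ∩ {Bplus, Bminus}) = ∅) :
    ∃ Uplus Uminus : Set (GromovClosure w),
      IsNeighborhood w Uplus (Sum.inr Aplus) ∧
      IsNeighborhood w Uminus (Sum.inr Aminus) ∧
      Uplus ∩ Uminus = ∅ ∧
      ∃ N : ℕ, 1 ≤ N ∧ ∀ k : ℕ, N ≤ k →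
        (closureMap w (g ^ k) '' Uplus) ∩ Uminus = ∅ := by
  have hδ : GromovProductHyperbolic X δ := hX.gromov
  have hδ0 := hδ.nonneg w
  have hff := hf.attracting_ne_repelling hδ hAp hAm
  have hgg := hg.attracting_ne_repelling hδ hBp hBm
  have hgf : Bplus ≠ Aplus ∧ Bplus ≠ Aminus ∧ Bminus ≠ Aplus := by
    refine ⟨?_, ?_, ?_⟩ <;> rintro rfl <;> simp [Set.ext_iff] at hindep
  obtain ⟨hfp, rfl⟩ := hAp.exists_orbit
  obtain ⟨hfm, rfl⟩ := hAm.exists_orbit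
  obtain ⟨hgp, rfl⟩ := hBp.exists_orbit
  obtain ⟨hgm, rfl⟩ := hBm.exists_orbit
  obtain ⟨C, T, hC⟩ := exists_orbitBounds hδ hff hgg hgf.1 hgf.2.1 hgf.2.2
  have hC0 : 0 ≤ C := (gromovProduct_nonneg _ _ _).trans (hC.f_f_inv T le_rfl T le_rfl)
  obtain ⟨M, hMT, hM⟩ := ((eventually_ge_atTop T).and
    ((hf.tendsto_dist w).eventually_gt_atTop (2 * C + 6 * δ + 1))).exists
  obtain ⟨N, hN⟩ := eventually_atTop.1 ((eventually_ge_atTop T).and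
    ((hg.tendsto_dist w).eventually_gt_atTop (2 * C + 5 * δ)))
  refine ⟨boundaryNbhd w (boundaryMap w (f ^ M) (boundaryPt w ⟨_, hgp⟩)) (C + 3 * δ + 1),
    boundaryNbhd w (boundaryMap w (f ^ M)⁻¹ (boundaryPt w ⟨_, hgp⟩)) (C + 3 * δ + 1),
    isNeighborhood_boundaryNbhd (by linarith)
      ((by linarith : _ < _).trans_le (hC.le_boundaryGP_attracting hδ hMT hgf.1)),
    isNeighborhood_boundaryNbhd (by linarith)
      ((by linarith : _ < _).trans_le (hC.le_boundaryGP_repelling hδ hMT hgf.2.1)),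
    boundaryNbhd_inter_eq_empty hδ _ _ (hC.eventually_le hMT) (hC.f_f_inv M hMT M hMT)
      (by linarith) (lt_add_one _),
    N + 1, by omega, fun n hn => hC.image_inter_eq_empty hδ hMT (by linarith)
      (hN n (by omega)).1 (hN n (by omega)).2 (by linarith)⟩
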